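/- Let M : ℕ × ℕ → ℂ be an infinite matrix all of whose rows and all of whose columns are square-summable. Then M defines a bounded operator on ℓ²(ℕ) if and only if sup_{n∈ℕ} ‖Pₙ M Pₙ‖ < ∞. Moreover, when M defines a bounded operator T on ℓ²(ℕ), one has ‖T‖ = sup_{n∈ℕ} ‖Pₙ M Pₙ‖. -/

import Mathlib

/-!
If `T` represents `M`, then `Pₙ M Pₙ` is the compression `Pₙ T Pₙ`, so `‖Pₙ M Pₙ‖ ≤ ‖T‖`.
Conversely, suppose `‖Pₙ M Pₙ‖ ≤ C` for all `n`. For `x ∈ ℓ²(ℕ)` the partial row sums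
`∑_{k ≤ N} M(j,k) x(k)`, `j ≤ N`, are the coordinates of `(P_N M P_N) (P_N x)`, so their squares
sum to at most `C² ‖x‖²`. The rows being square-summable, each row series converges, and letting
`N → ∞` bounds every finite part of `∑_j |∑_k M(j,k) x(k)|²` by `C² ‖x‖²`: the matrix defines an
operator on `ℓ²(ℕ)` of norm at most `C`.
-/

open Filter Topology

noncomputable section

/-- `M` defines the bounded operator `T` on `ℓ²(ℕ)`: for every `x ∈ ℓ²(ℕ)` and every `j`,
`(T x)(j) = ∑_k M(j,k) x(k)`, the series converging absolutely. -/
def RepresentsMatrix (M : ℕ → ℕ → ℂ)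
    (T : lp (fun _ : ℕ => ℂ) 2 →L[ℂ] lp (fun _ : ℕ => ℂ) 2) : Prop :=
  ∀ (x : lp (fun _ : ℕ => ℂ) 2) (j : ℕ),
    Summable (fun k => ‖M j k * x k‖) ∧ T x j = ∑' k, M j k * x k

/-- The operator norm `‖Pₙ A Pₙ‖` of the compression of the infinite matrix `A` to the span of
`e_0, …, e_n`, computed as the operator norm of the corresponding `(n+1) × (n+1)` matrix acting
on Euclidean space. -/
def truncNorm (A : ℕ → ℕ → ℂ) (n : ℕ) : ℝ :=
  ‖Matrix.toEuclideanCLM (𝕜 := ℂ) (Matrix.of fun i j : Fin (n + 1) => A i j)‖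

open scoped lp

namespace lp

variable {ι : Type*} {E : ι → Type*} [∀ i, NormedAddCommGroup (E i)]

lemma summable_norm_sq (x : lp E 2) : Summable fun i => ‖x i‖ ^ 2 := by
  simpa [Real.rpow_two] using (lp.memℓp x).summable (by norm_num)

lemma norm_sq_eq_tsum (x : lp E 2) : ‖x‖ ^ 2 = ∑' i, ‖x i‖ ^ 2 := by
  simpa [Real.rpow_two] using lp.norm_rpow_eq_tsum (by norm_num) x

lemma sum_norm_sq_le_norm_sq (x : lp E 2) (s : Finset ι) : ∑ i ∈ s, ‖x i‖ ^ 2 ≤ ‖x‖ ^ 2 := by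
  simpa [Real.rpow_two] using lp.sum_rpow_le_norm_rpow (by norm_num) x s

lemma _root_.memℓp_two_of_forall_sum_norm_sq_le {f : ∀ i, E i} {C : ℝ}
    (hf : ∀ s : Finset ι, ∑ i ∈ s, ‖f i‖ ^ 2 ≤ C) : Memℓp f 2 :=
  memℓp_gen' (C := C) (by simpa [Real.rpow_two] using hf)

lemma norm_le_of_forall_sum_norm_sq_le {x : lp E 2} {C : ℝ} (hC : 0 ≤ C)
    (hx : ∀ s : Finset ι, ∑ i ∈ s, ‖x i‖ ^ 2 ≤ C ^ 2) : ‖x‖ ≤ C :=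
  lp.norm_le_of_forall_sum_le (by norm_num) hC (by simpa [Real.rpow_two] using hx)

end lp

lemma summable_norm_mul_of_summable_norm_sq {ι R : Type*} [NonUnitalSeminormedRing R]
    {f g : ι → R} (hf : Summable fun i => ‖f i‖ ^ 2) (hg : Summable fun i => ‖g i‖ ^ 2) :
    Summable fun i => ‖f i * g i‖ :=
  .of_nonneg_of_le (fun _ => norm_nonneg _) (fun i => calc
      ‖f i * g i‖ ≤ ‖f i‖ * ‖g i‖ := norm_mul_le _ _
      _ ≤ (‖f i‖ ^ 2 + ‖g i‖ ^ 2) / 2 := by nlinarith [sq_nonneg (‖f i‖ - ‖g i‖)])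
    ((hf.add hg).div_const 2)

-- `truncNorm M n` is, by definition, the norm of `toEuclideanCLM (topLeftCorner M (n + 1))`.
def topLeftCorner {𝕜 : Type*} (M : ℕ → ℕ → 𝕜) (m : ℕ) : Matrix (Fin m) (Fin m) 𝕜 :=
  Matrix.of fun i j => M i j

section Truncation

variable {𝕜 : Type*} [RCLike 𝕜]

def restrictFin (m : ℕ) (x : ℓ²(ℕ, 𝕜)) : EuclideanSpace 𝕜 (Fin m) :=
  WithLp.toLp 2 fun i => x i

lemma norm_restrictFin_le (m : ℕ) (x : ℓ²(ℕ, 𝕜)) : ‖restrictFin m x‖ ≤ ‖x‖ := by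
  refine pow_le_pow_iff_left₀ (norm_nonneg _) (norm_nonneg _) two_ne_zero |>.mp ?_
  rw [EuclideanSpace.norm_sq_eq]
  simpa [restrictFin, Fin.sum_univ_eq_sum_range (fun k => ‖x k‖ ^ 2)]
    using lp.sum_norm_sq_le_norm_sq x (Finset.range m)

def extendFin (m : ℕ) (v : EuclideanSpace 𝕜 (Fin m)) : ℓ²(ℕ, 𝕜) :=
  ⟨fun k => if h : k < m then v ⟨k, h⟩ else 0, by
    refine (memℓp_zero_iff.mpr ((Set.finite_lt_nat m).subset fun k hk => ?_)).of_exponent_ge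
      zero_le
    by_contra h
    exact hk (dif_neg h)⟩

lemma extendFin_apply_of_ge {m k : ℕ} (v : EuclideanSpace 𝕜 (Fin m)) (hk : m ≤ k) :
    extendFin m v k = 0 :=
  dif_neg hk.not_gt

@[simp]
lemma extendFin_apply_fin {m : ℕ} (v : EuclideanSpace 𝕜 (Fin m)) (i : Fin m) :
    extendFin m v i = v i :=
  dif_pos i.isLt

lemma norm_extendFin (m : ℕ) (v : EuclideanSpace 𝕜 (Fin m)) : ‖extendFin m v‖ = ‖v‖ := by
  refine (pow_left_inj₀ (norm_nonneg _) (norm_nonneg _) two_ne_zero).mp ?_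
  rw [lp.norm_sq_eq_tsum, EuclideanSpace.norm_sq_eq, tsum_eq_sum (s := Finset.range m)
    fun k hk => by simp [extendFin_apply_of_ge v (not_lt.mp (Finset.mem_range.not.mp hk))],
    ← Fin.sum_univ_eq_sum_range (fun k => ‖extendFin m v k‖ ^ 2)]
  simp

variable {M : ℕ → ℕ → 𝕜} {m : ℕ}

lemma toEuclideanCLM_topLeftCorner_apply (v : EuclideanSpace 𝕜 (Fin m)) (i : Fin m) :
    Matrix.toEuclideanCLM (𝕜 := 𝕜) (topLeftCorner M m) v i = ∑ k : Fin m, M i k * v k := by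
  simp [topLeftCorner, Matrix.mulVec, dotProduct]

lemma toEuclideanCLM_topLeftCorner_restrictFin_apply (x : ℓ²(ℕ, 𝕜)) (i : Fin m) :
    Matrix.toEuclideanCLM (𝕜 := 𝕜) (topLeftCorner M m) (restrictFin m x) i =
      ∑ k ∈ Finset.range m, M i k * x k := by
  rw [toEuclideanCLM_topLeftCorner_apply, ← Fin.sum_univ_eq_sum_range (fun k => M i k * x k)]
  rfl

end Truncation

namespace RepresentsMatrix

variable {M : ℕ → ℕ → ℂ} {T : ℓ²(ℕ, ℂ) →L[ℂ] ℓ²(ℕ, ℂ)}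

lemma toEuclideanCLM_topLeftCorner (hT : RepresentsMatrix M T) (m : ℕ)
    (v : EuclideanSpace ℂ (Fin m)) :
    Matrix.toEuclideanCLM (𝕜 := ℂ) (topLeftCorner M m) v = restrictFin m (T (extendFin m v)) := by
  ext i
  rw [toEuclideanCLM_topLeftCorner_apply, restrictFin, PiLp.toLp_apply, (hT _ i).2,
    tsum_eq_sum (s := Finset.range m) fun k hk => by
      rw [extendFin_apply_of_ge v (not_lt.mp (Finset.mem_range.not.mp hk)), mul_zero],
    ← Fin.sum_univ_eq_sum_range (fun k => M i k * extendFin m v k)]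
  simp

lemma truncNorm_le_opNorm (hT : RepresentsMatrix M T) (n : ℕ) : truncNorm M n ≤ ‖T‖ := by
  refine ContinuousLinearMap.opNorm_le_bound _ (norm_nonneg T) fun v => ?_
  calc _ = ‖restrictFin (n + 1) (T (extendFin (n + 1) v))‖ :=
        congrArg norm (hT.toEuclideanCLM_topLeftCorner (n + 1) v)
    _ ≤ ‖T (extendFin (n + 1) v)‖ := norm_restrictFin_le _ _
    _ ≤ ‖T‖ * ‖v‖ := by simpa only [norm_extendFin] using T.le_opNorm (extendFin (n + 1) v)

end RepresentsMatrix

section RowSums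

variable {M : ℕ → ℕ → ℂ}

lemma sum_norm_sq_partialRowSum_le (x : ℓ²(ℕ, ℂ)) {N : ℕ} {s : Finset ℕ}
    (hs : s ⊆ Finset.range (N + 1)) :
    ∑ j ∈ s, ‖∑ k ∈ Finset.range (N + 1), M j k * x k‖ ^ 2 ≤ (truncNorm M N * ‖x‖) ^ 2 := by
  set A := Matrix.toEuclideanCLM (𝕜 := ℂ) (topLeftCorner M (N + 1))
  calc ∑ j ∈ s, ‖∑ k ∈ Finset.range (N + 1), M j k * x k‖ ^ 2
      ≤ ∑ j ∈ Finset.range (N + 1), ‖∑ k ∈ Finset.range (N + 1), M j k * x k‖ ^ 2 :=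
        Finset.sum_le_sum_of_subset_of_nonneg hs fun _ _ _ => by positivity
    _ = ‖A (restrictFin (N + 1) x)‖ ^ 2 := by
        simp only [EuclideanSpace.norm_sq_eq, A, toEuclideanCLM_topLeftCorner_restrictFin_apply]
        exact (Fin.sum_univ_eq_sum_range
          (fun j => ‖∑ k ∈ Finset.range (N + 1), M j k * x k‖ ^ 2) _).symm
    _ ≤ (‖A‖ * ‖x‖) ^ 2 := by
        gcongr
        exact (A.le_opNorm _).trans (by gcongr; exact norm_restrictFin_le _ _)

lemma summable_norm_row_mul (hrow : ∀ j, Summable fun k => ‖M j k‖ ^ 2) (x : ℓ²(ℕ, ℂ))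
    (j : ℕ) : Summable fun k => ‖M j k * x k‖ :=
  summable_norm_mul_of_summable_norm_sq (hrow j) (lp.summable_norm_sq x)

lemma sum_norm_sq_rowSum_le (hrow : ∀ j, Summable fun k => ‖M j k‖ ^ 2)
    {C : ℝ} (hC : ∀ n, truncNorm M n ≤ C) (x : ℓ²(ℕ, ℂ)) (s : Finset ℕ) :
    ∑ j ∈ s, ‖∑' k, M j k * x k‖ ^ 2 ≤ (C * ‖x‖) ^ 2 := by
  have hpartial : Tendsto (fun N => ∑ j ∈ s, ‖∑ k ∈ Finset.range (N + 1), M j k * x k‖ ^ 2)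
      atTop (𝓝 (∑ j ∈ s, ‖∑' k, M j k * x k‖ ^ 2)) :=
    tendsto_finsetSum _ fun j _ =>
      ((((summable_norm_row_mul hrow x j).of_norm.hasSum.tendsto_sum_nat).comp
        (tendsto_add_atTop_nat 1)).norm).pow 2
  refine le_of_tendsto hpartial (eventually_atTop.2 ⟨s.sup id, fun N hN => ?_⟩)
  have hs : s ⊆ Finset.range (N + 1) := fun j hj =>
    Finset.mem_range.2 (Nat.lt_succ_of_le ((Finset.le_sup (f := id) hj).trans hN))
  calc _ ≤ (truncNorm M N * ‖x‖) ^ 2 := sum_norm_sq_partialRowSum_le x hs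
    _ ≤ (C * ‖x‖) ^ 2 := by
        gcongr
        · exact mul_nonneg (norm_nonneg _) (norm_nonneg _)
        · exact hC N

lemma exists_representsMatrix_of_forall_truncNorm_le (hrow : ∀ j, Summable fun k => ‖M j k‖ ^ 2)
    {C : ℝ} (hC : ∀ n, truncNorm M n ≤ C) : ∃ T, RepresentsMatrix M T := by
  have hC0 : 0 ≤ C := (norm_nonneg _).trans (hC 0)
  let A : ℓ²(ℕ, ℂ) →ₗ[ℂ] ℓ²(ℕ, ℂ) :=
    { toFun := fun x => ⟨fun j => ∑' k, M j k * x k,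
        memℓp_two_of_forall_sum_norm_sq_le (sum_norm_sq_rowSum_le hrow hC x)⟩
      map_add' := fun x y => Subtype.ext <| funext fun j => by
        simp only [lp.coeFn_add, Pi.add_apply, mul_add]
        exact (summable_norm_row_mul hrow x j).of_norm.tsum_add
          (summable_norm_row_mul hrow y j).of_norm
      map_smul' := fun c x => Subtype.ext <| funext fun j => by
        simp only [lp.coeFn_smul, Pi.smul_apply, smul_eq_mul, RingHom.id_apply,
          mul_left_comm _ c, tsum_mul_left] }
  exact ⟨A.mkContinuous C fun x => lp.norm_le_of_forall_sum_norm_sq_le (by positivity)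
    (sum_norm_sq_rowSum_le hrow hC x), fun x j => ⟨summable_norm_row_mul hrow x j, rfl⟩⟩

lemma RepresentsMatrix.opNorm_le_of_forall_truncNorm_le {T : ℓ²(ℕ, ℂ) →L[ℂ] ℓ²(ℕ, ℂ)}
    (hT : RepresentsMatrix M T) (hrow : ∀ j, Summable fun k => ‖M j k‖ ^ 2) {C : ℝ}
    (hC : ∀ n, truncNorm M n ≤ C) : ‖T‖ ≤ C := by
  have hC0 : 0 ≤ C := (norm_nonneg _).trans (hC 0)
  refine T.opNorm_le_bound hC0 fun x => lp.norm_le_of_forall_sum_norm_sq_le (by positivity)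
    fun s => ?_
  exact (Finset.sum_congr rfl fun j _ => by rw [(hT x j).2]).trans_le
    (sum_norm_sq_rowSum_le hrow hC x s)

end RowSums

theorem matrix_bounded_iff_sup_truncations_lt_top_general (M : ℕ → ℕ → ℂ)
    (hrow : ∀ j, Summable fun k => ‖M j k‖ ^ 2) :
    ((∃ T, RepresentsMatrix M T) ↔ BddAbove (Set.range fun n => truncNorm M n)) ∧
      ∀ T, RepresentsMatrix M T → ‖T‖ = ⨆ n, truncNorm M n := by
  have hbdd : ∀ T, RepresentsMatrix M T → BddAbove (Set.range fun n => truncNorm M n) :=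
    fun T hT => ⟨‖T‖, Set.forall_mem_range.2 hT.truncNorm_le_opNorm⟩
  refine ⟨⟨fun ⟨T, hT⟩ => hbdd T hT, fun ⟨C, hC⟩ =>
    exists_representsMatrix_of_forall_truncNorm_le hrow fun n => hC ⟨n, rfl⟩⟩, fun T hT => ?_⟩
  exact le_antisymm (hT.opNorm_le_of_forall_truncNorm_le hrow (le_ciSup (hbdd T hT)))
    (ciSup_le hT.truncNorm_le_opNorm)

/-- Lemma 5.3: an infinite matrix with square-summable rows and columns defines a bounded
operator on `ℓ²(ℕ)` iff `sup_n ‖Pₙ M Pₙ‖ < ∞`, in which case `‖T‖ = sup_n ‖Pₙ M Pₙ‖`. -/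
theorem matrix_bounded_iff_sup_truncations_lt_top (M : ℕ → ℕ → ℂ)
    (hrow : ∀ j, Summable fun k => ‖M j k‖ ^ 2)
    (hcol : ∀ k, Summable fun j => ‖M j k‖ ^ 2) :
    ((∃ T, RepresentsMatrix M T) ↔ BddAbove (Set.range fun n => truncNorm M n)) ∧
      ∀ T, RepresentsMatrix M T → ‖T‖ = ⨆ n, truncNorm M n :=
  matrix_bounded_iff_sup_truncations_lt_top_general M hrow
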